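/- Let X = T(θ_n,S_n)_{n∈ℕ} be a regular mixed Tsirelson space with norm ‖·‖ and θ_0 = 1. Let k ∈ ℕ and x_1 < x_2 < ⋯ < x_k be nonzero vectors in c₀₀ with k ≤ min ran(x_1) and ‖x_i‖ ≤ 1 for all i; set x = (1/k)(x_1 + ⋯ + x_k), N_i = max ran(x_i) for 1 ≤ i ≤ k and N_0 = 1. Let ε ∈ (0,1), N ∈ ℕ, and let F ⊆ ran(x) be an interval which does not split any x_i. If k > 6N/(θ_1·ε), then for every p ≥ 1: ‖Fx‖_{N,p} ≤ (θ_p/θ_{p−1})·max{ ‖x_i‖_{N_{i−1},p−1} : 1 ≤ i ≤ k, ran(x_i) ⊆ F } + ε, where the maximum over the empty set is taken to be 0. -/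

import Mathlib

open Filter

noncomputable section

/-- `c₀₀`: the finitely supported real sequences. -/
abbrev C00 : Type := ℕ →₀ ℝ

/-- The unit vector basis of `c₀₀`. -/
def eBasis (i : ℕ) : C00 := Finsupp.single i 1

/-- `f` is a norm on `c₀₀`. -/
def IsNorm (f : C00 → ℝ) : Prop :=
  (∀ v w : C00, f (v + w) ≤ f v + f w) ∧
  (∀ (c : ℝ) (v : C00), f (c • v) = |c| * f v) ∧
  (∀ v : C00, v ≠ 0 → 0 < f v)

/-- `E < F` for finite sets of naturals: every element of `E` is smaller than
every element of `F` (vacuously true if one of them is empty). -/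
def FinLt (E F : Finset ℕ) : Prop := ∀ a ∈ E, ∀ b ∈ F, a < b

/-- `min ran(v)` = the minimum of the support of `v`. -/
def minSupp (v : C00) : ℕ := sInf {j | v j ≠ 0}

/-- `max ran(v)` = the maximum of the support of `v`. -/
def maxSupp (v : C00) : ℕ := sSup {j | v j ≠ 0}

/-- `ran(v)`: the smallest integer interval containing the support of `v`. -/
def ranSet (v : C00) : Set ℕ := Set.Icc (minSupp v) (maxSupp v)

/-- `E` is an interval of naturals. -/
def IsInterval (E : Finset ℕ) : Prop :=
  ∀ a ∈ E, ∀ b ∈ E, ∀ c : ℕ, a ≤ c → c ≤ b → c ∈ E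

/-- The Schreier families `S_n`, `n ∈ ℕ`. -/
def SchreierFam : ℕ → Set (Finset ℕ)
  | 0 => {F : Finset ℕ | F.card ≤ 1}
  | (n + 1) => {F : Finset ℕ | ∃ (k : ℕ) (Fs : Fin k → Finset ℕ),
      (∀ i, Fs i ∈ SchreierFam n) ∧
      (∀ i j : Fin k, i < j → FinLt (Fs i) (Fs j)) ∧
      (∀ i, ∀ a ∈ Fs i, k ≤ a) ∧
      F = Finset.univ.biUnion Fs}

/-- `S_ω = {F : n ≤ F and F ∈ S_n for some n}`. -/
def SchreierOmega : Set (Finset ℕ) :=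
  {F : Finset ℕ | ∃ n : ℕ, (∀ a ∈ F, n ≤ a) ∧ F ∈ SchreierFam n}

/-- The restriction `Ex` of `x` to a finite set `E`. -/
def restr (E : Finset ℕ) (v : C00) : C00 := v.filter (fun j => j ∈ E)

/-- `(E_i)` is an admissible family of (nonempty, finite) sets for the family `S`:
`E_1 < E_2 < ⋯` and `{min E_i} ∈ S`. -/
def AdmissibleSets (S : Set (Finset ℕ)) {m : ℕ} (E : Fin m → Finset ℕ) : Prop :=
  (∀ i, (E i).Nonempty) ∧
  (∀ i j : Fin m, i < j → FinLt (E i) (E j)) ∧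
  (Finset.univ.image fun i => sInf ((E i : Set ℕ))) ∈ S

/-- `(E_i)` is an admissible family of (nonempty) intervals for the family `S`. -/
def AdmissibleIntervals (S : Set (Finset ℕ)) {m : ℕ} (E : Fin m → Finset ℕ) : Prop :=
  (∀ i, (E i).Nonempty ∧ IsInterval (E i)) ∧
  (∀ i j : Fin m, i < j → FinLt (E i) (E j)) ∧
  (Finset.univ.image fun i => sInf ((E i : Set ℕ))) ∈ S

/-- `nrm` satisfies the implicit mixed Tsirelson norm equation with parameters `θ_q`
and families `Sq q` (`q ≥ 1`):
`‖x‖ = max(‖x‖_∞, sup{θ_q Σ ‖E_i x‖ : q ≥ 1, (E_i) q-admissible})`. -/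
def MixedTsirelsonNormGen (θ : ℕ → ℝ) (Sq : ℕ → Set (Finset ℕ)) (nrm : C00 → ℝ) : Prop :=
  ∀ x : C00, nrm x =
    max (sSup {r : ℝ | ∃ j : ℕ, r = |x j|})
      (sSup {r : ℝ | ∃ (q m : ℕ) (E : Fin m → Finset ℕ), 1 ≤ q ∧
        AdmissibleSets (Sq q) E ∧ r = θ q * ∑ i, nrm (restr (E i) x)})

/-- `nrm` is the norm of the mixed Tsirelson space `T(θ_n, S_n)_{n ∈ ℕ}`. -/
def MixedTsirelsonNorm (θ : ℕ → ℝ) (nrm : C00 → ℝ) : Prop :=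
  MixedTsirelsonNormGen θ SchreierFam nrm

/-- `(θ_n)_{n ≥ 1}` is a regular sequence. -/
def RegularSeq (θ : ℕ → ℝ) : Prop :=
  (∀ n : ℕ, 1 ≤ n → 0 < θ n ∧ θ n < 1) ∧
  (∀ n : ℕ, 1 ≤ n → θ (n + 1) ≤ θ n) ∧
  Tendsto θ atTop (nhds 0) ∧
  (∀ n m : ℕ, 1 ≤ n → 1 ≤ m → θ n * θ m ≤ θ (n + m))

/-- The `i`-th block `Σ_{j = m_i}^{m_{i+1} - 1} a_j x_j` of a block sequence of `(x_j)`
with coefficients `a` and breakpoints `m`. -/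
def blk (x : ℕ → C00) (a : ℕ → ℝ) (m : ℕ → ℕ) (i : ℕ) : C00 :=
  ∑ j ∈ Finset.Ico (m i) (m (i + 1)), a j • x j

/-- The minimum of the range w.r.t. `(x_j)` of the `i`-th block: the least `j` in
`[m_i, m_{i+1})` with `a_j ≠ 0`. -/
def minRangeIdx (a : ℕ → ℝ) (m : ℕ → ℕ) (i : ℕ) : ℕ :=
  sInf {j : ℕ | j ∈ Finset.Ico (m i) (m (i + 1)) ∧ a j ≠ 0}

/-- `(x_i)` is an (infinite) block sequence of `(e_i)`: nonzero and `x_1 < x_2 < ⋯`. -/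
def IsBlockSeq (x : ℕ → C00) : Prop :=
  (∀ i, x i ≠ 0) ∧ ∀ i, FinLt (x i).support (x (i + 1)).support

/-- `(z_i)` is an (infinite) block sequence of `(x_i)`. -/
def IsBlockOf (x z : ℕ → C00) : Prop :=
  ∃ (a : ℕ → ℝ) (m : ℕ → ℕ), StrictMono m ∧ (∀ i, z i = blk x a m i) ∧ ∀ i, z i ≠ 0

/-- The set of `δ ≥ 0` witnessing the `ℓ_1`-estimate for all finite block sequences of
`(x_i)` that are admissible (for the family `S`) *with respect to `(x_i)`*. -/
def deltaSetX (S : Set (Finset ℕ)) (nrm : C00 → ℝ) (x : ℕ → C00) : Set ℝ :=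
  {δ : ℝ | 0 ≤ δ ∧ ∀ (n : ℕ) (a : ℕ → ℝ) (m : ℕ → ℕ), StrictMono m →
    (∀ i < n, blk x a m i ≠ 0) →
    (Finset.range n).image (fun i => minRangeIdx a m i) ∈ S →
    δ * ∑ i ∈ Finset.range n, nrm (blk x a m i) ≤
      nrm (∑ i ∈ Finset.range n, blk x a m i)}

/-- The set of `δ ≥ 0` witnessing the `ℓ_1`-estimate for all finite block sequences of
`(x_i)` that are admissible (for the family `S`) *with respect to `(e_i)`*. -/
def deltaSetE (S : Set (Finset ℕ)) (nrm : C00 → ℝ) (x : ℕ → C00) : Set ℝ :=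
  {δ : ℝ | 0 ≤ δ ∧ ∀ (n : ℕ) (a : ℕ → ℝ) (m : ℕ → ℕ), StrictMono m →
    (∀ i < n, blk x a m i ≠ 0) →
    (Finset.range n).image (fun i => minSupp (blk x a m i)) ∈ S →
    δ * ∑ i ∈ Finset.range n, nrm (blk x a m i) ≤
      nrm (∑ i ∈ Finset.range n, blk x a m i)}

/-- `δ_α(x_i)` (α-admissibility w.r.t. `(x_i)`), for the α-th family `S`. -/
def deltaX (S : Set (Finset ℕ)) (nrm : C00 → ℝ) (x : ℕ → C00) : ℝ :=
  sSup (deltaSetX S nrm x)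

/-- `δ_α((x_i),(e_i))` (α-admissibility w.r.t. `(e_i)`), for the α-th family `S`. -/
def deltaE (S : Set (Finset ℕ)) (nrm : C00 → ℝ) (x : ℕ → C00) : ℝ :=
  sSup (deltaSetE S nrm x)

/-- `nrm'` is an equivalent norm to `nrm`. -/
def EquivNormOn (nrm nrm' : C00 → ℝ) : Prop :=
  ∃ c C : ℝ, 0 < c ∧ (∀ x, c * nrm x ≤ nrm' x) ∧ ∀ x, nrm' x ≤ C * nrm x

/-- The set whose supremum is `δ̈`(S)`(y_i)`: all values `δ_S((z_i), |·|)` where `|·|`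
is an equivalent norm on `X` and `(z_i)` is a block sequence of `(y_i)`. -/
def dessSet (S : Set (Finset ℕ)) (nrm : C00 → ℝ) (y : ℕ → C00) : Set ℝ :=
  {d : ℝ | ∃ (nrm' : C00 → ℝ) (z : ℕ → C00), IsNorm nrm' ∧ EquivNormOn nrm nrm' ∧
    IsBlockOf y z ∧ d = deltaX S nrm' z}

/-- A Schreier hierarchy `(S_α)_{α < ω₁}`. -/
structure IsSchreierHierarchy (S : Ordinal → Set (Finset ℕ)) : Prop where
  zero : S 0 = {F : Finset ℕ | F.card ≤ 1}
  succ : ∀ α : Ordinal, α < Ordinal.omega 1 →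
    S (α + 1) = {F : Finset ℕ | ∃ (k : ℕ) (Fs : Fin k → Finset ℕ),
      (∀ i, Fs i ∈ S α) ∧
      (∀ i j : Fin k, i < j → FinLt (Fs i) (Fs j)) ∧
      (∀ i, ∀ a ∈ Fs i, k ≤ a) ∧
      F = Finset.univ.biUnion Fs}
  limit : ∀ α : Ordinal, α < Ordinal.omega 1 → Order.IsSuccLimit α →
    ∃ f : ℕ → Ordinal, StrictMono f ∧ (⨆ n, f n) = α ∧
      S α = {F : Finset ℕ | ∃ n : ℕ, (∀ a ∈ F, n ≤ a) ∧ F ∈ S (f n)}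

/-- `(y_i)` Δ-stabilizes `γ = (γ_α)_{α<ω₁}`. -/
def DeltaStabilizes (S : Ordinal → Set (Finset ℕ)) (nrm : C00 → ℝ)
    (y : ℕ → C00) (γ : Ordinal → ℝ) : Prop :=
  ∃ ε : ℕ → ℝ, Antitone ε ∧ Tendsto ε atTop (nhds 0) ∧
    ∀ α : Ordinal, α < Ordinal.omega 1 → ∃ m : ℕ, ∀ n : ℕ, m ≤ n →
      ∀ z : ℕ → C00, IsBlockOf (fun i => y (i + n)) z →
        |deltaX (S α) nrm z - γ α| < ε n

/-- `(y_i)` Δ_{(e_i)}-stabilizes `γ = (γ_α)_{α<ω₁}`. -/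
def DeltaStabilizesE (S : Ordinal → Set (Finset ℕ)) (nrm : C00 → ℝ)
    (y : ℕ → C00) (γ : Ordinal → ℝ) : Prop :=
  ∃ ε : ℕ → ℝ, Antitone ε ∧ Tendsto ε atTop (nhds 0) ∧
    ∀ α : Ordinal, α < Ordinal.omega 1 → ∃ m : ℕ, ∀ n : ℕ, m ≤ n →
      ∀ z : ℕ → C00, IsBlockOf (fun i => y (i + n)) z →
        |deltaE (S α) nrm z - γ α| < ε n

/-- `(e_i)` is a basic sequence for the norm `nrm`. -/
def IsBasicE (nrm : C00 → ℝ) : Prop :=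
  ∃ K : ℝ, ∀ (a : ℕ → ℝ) (m n : ℕ), m ≤ n →
    nrm (∑ i ∈ Finset.range m, a i • eBasis i) ≤
      K * nrm (∑ i ∈ Finset.range n, a i • eBasis i)

/-- The auxiliary norm `‖x‖_p` (`‖·‖_0 = ‖·‖`). -/
def pnorm (θ : ℕ → ℝ) (nrm : C00 → ℝ) (p : ℕ) (x : C00) : ℝ :=
  if p = 0 then nrm x
  else θ p * sSup {r : ℝ | ∃ (m : ℕ) (E : Fin m → Finset ℕ),
    AdmissibleIntervals (SchreierFam p) E ∧ r = ∑ i, nrm (restr (E i) x)}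

/-- The auxiliary seminorm `‖x‖_{N,p}`. -/
def nNorm (θ : ℕ → ℝ) (nrm : C00 → ℝ) (N p : ℕ) (x : C00) : ℝ :=
  sSup {r : ℝ | ∃ E : Fin N → Finset ℕ, (∀ i, IsInterval (E i)) ∧
    (∀ i j : Fin N, i < j → FinLt (E i) (E j)) ∧ (∀ i, ∀ a ∈ E i, N ≤ a) ∧
    r = ∑ i, pnorm θ nrm p (restr (E i) x)}

/-- The auxiliary norm `‖x‖_{S_q,p}`. -/
def sNNorm (θ : ℕ → ℝ) (nrm : C00 → ℝ) (q p : ℕ) (x : C00) : ℝ :=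
  sSup {r : ℝ | ∃ (m : ℕ) (E : Fin m → Finset ℕ),
    AdmissibleIntervals (SchreierFam q) E ∧ r = ∑ i, pnorm θ nrm p (restr (E i) x)}

/-!
Restricted to `F`, the average becomes `k⁻¹ ∑_{i ∈ A} x_i`, where `A` indexes the blocks lying
in `F`. Fix one of the `N` intervals `E` and a `p`-admissible family `(G_l)`. Each block
contributes at most `θ_p ∑_l ‖G_l E x_i‖ ≤ ‖x_i‖ ≤ 1`. If `x_i` lies in `E` and the family
already met an earlier block, then the family starts before `N_{i-1}` while `x_i` lives after
`N_{i-1}`; writing the minima of the family as a union of at most `N_{i-1}` successive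
`S_{p-1}`-sets bounds the contribution by `(θ_p / θ_{p-1}) ‖x_i‖_{N_{i-1},p-1}`. Only three blocks
escape both bounds: the first one met and the two sticking out of `E`. Hence
`‖E x‖_p ≤ (3 + #{i : x_i ⊆ E} · (θ_p/θ_{p-1}) M) / k`, and summing over the `N` disjoint
intervals gives `(θ_p/θ_{p-1}) M + 3N/k ≤ (θ_p/θ_{p-1}) M + ε`.
-/

open Finset

section Restriction

lemma restr_apply (E : Finset ℕ) (v : C00) (j : ℕ) :
    restr E v j = if j ∈ E then v j else 0 := rfl

lemma mem_support_restr {E : Finset ℕ} {v : C00} {j : ℕ} :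
    j ∈ (restr E v).support ↔ j ∈ v.support ∧ j ∈ E := by
  rw [restr, Finsupp.support_filter, mem_filter]

lemma restr_restr (E G : Finset ℕ) (v : C00) : restr E (restr G v) = restr (E ∩ G) v := by
  ext j
  simp only [restr_apply, mem_inter]
  by_cases hE : j ∈ E <;> by_cases hG : j ∈ G <;> simp [hE, hG]

lemma restr_comm (E G : Finset ℕ) (v : C00) : restr E (restr G v) = restr G (restr E v) := by
  rw [restr_restr, restr_restr, inter_comm]

lemma restr_eq_self {E : Finset ℕ} {v : C00} (h : ∀ j ∈ v.support, j ∈ E) : restr E v = v :=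
  (Finsupp.filter_eq_self_iff _ _).2 fun j hj => h j (Finsupp.mem_support_iff.2 hj)

lemma restr_eq_zero {E : Finset ℕ} {v : C00} (h : ∀ j ∈ v.support, j ∉ E) : restr E v = 0 :=
  (Finsupp.filter_eq_zero_iff _ _).2 fun j hjE => by
    by_contra hj
    exact h j (Finsupp.mem_support_iff.2 hj) hjE

lemma restr_smul (E : Finset ℕ) (c : ℝ) (v : C00) : restr E (c • v) = c • restr E v :=
  Finsupp.filter_smul

lemma restr_sum {ι : Type*} (E : Finset ℕ) (s : Finset ι) (f : ι → C00) :
    restr E (∑ i ∈ s, f i) = ∑ i ∈ s, restr E (f i) :=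
  Finsupp.filter_sum _ _

end Restriction

section Support

lemma bddAbove_setOf_apply_ne_zero (v : C00) : BddAbove {j | v j ≠ 0} := by
  rw [show {j | v j ≠ 0} = (v.support : Set ℕ) from Finsupp.fun_support_eq v]
  exact v.support.bddAbove

lemma minSupp_le {v : C00} {j : ℕ} (hj : v j ≠ 0) : minSupp v ≤ j :=
  Nat.sInf_le hj

lemma le_maxSupp {v : C00} {j : ℕ} (hj : v j ≠ 0) : j ≤ maxSupp v :=
  le_csSup (bddAbove_setOf_apply_ne_zero v) hj

lemma apply_minSupp_ne_zero {v : C00} (hv : v ≠ 0) : v (minSupp v) ≠ 0 :=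
  Nat.sInf_mem (Finsupp.ne_iff.1 hv)

lemma apply_maxSupp_ne_zero {v : C00} (hv : v ≠ 0) : v (maxSupp v) ≠ 0 :=
  Nat.sSup_mem (Finsupp.ne_iff.1 hv) (bddAbove_setOf_apply_ne_zero v)

lemma mem_ranSet {v : C00} {j : ℕ} (hj : v j ≠ 0) : j ∈ ranSet v :=
  ⟨minSupp_le hj, le_maxSupp hj⟩

lemma mem_of_minSupp_mem_of_maxSupp_mem {E : Finset ℕ} (hE : IsInterval E) {v : C00}
    (hmin : minSupp v ∈ E) (hmax : maxSupp v ∈ E) {j : ℕ} (hj : v j ≠ 0) : j ∈ E :=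
  hE _ hmin _ hmax j (minSupp_le hj) (le_maxSupp hj)

end Support

section Order

lemma FinLt.disjoint {E F : Finset ℕ} (h : FinLt E F) : Disjoint E F :=
  disjoint_left.2 fun a ha haF => lt_irrefl a (h a ha a haF)

lemma disjoint_of_finLt {m : ℕ} {E : Fin m → Finset ℕ}
    (hE : ∀ i j : Fin m, i < j → FinLt (E i) (E j)) {i j : Fin m} (hij : i ≠ j) :
    Disjoint (E i) (E j) := by
  rcases lt_or_gt_of_ne hij with h | h
  · exact (hE i j h).disjoint
  · exact ((hE j i h).disjoint).symm

lemma strictMono_sInf_of_finLt {m : ℕ} {E : Fin m → Finset ℕ} (hne : ∀ i, (E i).Nonempty)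
    (hE : ∀ i j : Fin m, i < j → FinLt (E i) (E j)) :
    StrictMono fun i => sInf (E i : Set ℕ) :=
  fun i j h => hE i j h _ (hne i).csInf_mem _ (hne j).csInf_mem

lemma card_le_one_of_forall_not_lt {s : Finset ℕ} (h : ∀ a ∈ s, ∀ b ∈ s, ¬ a < b) :
    s.card ≤ 1 :=
  card_le_one.2 fun a ha b hb => le_antisymm (not_lt.1 (h b hb a ha)) (not_lt.1 (h a ha b hb))

end Order

namespace IsNorm

variable {nrm : C00 → ℝ}

lemma map_zero (hn : IsNorm nrm) : nrm 0 = 0 := by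
  simpa using hn.2.1 0 0

lemma nonneg (hn : IsNorm nrm) (v : C00) : 0 ≤ nrm v := by
  have h := hn.1 v ((-1 : ℝ) • v)
  rw [hn.2.1, neg_one_smul, add_neg_cancel, hn.map_zero] at h
  norm_num at h
  linarith

lemma sum_le (hn : IsNorm nrm) {ι : Type*} (s : Finset ι) (f : ι → C00) :
    nrm (∑ i ∈ s, f i) ≤ ∑ i ∈ s, nrm (f i) :=
  le_sum_of_subadditive nrm hn.map_zero.le hn.1 s f

end IsNorm

namespace RegularSeq

variable {θ : ℕ → ℝ}

lemma pos (hreg : RegularSeq θ) (hθ0 : θ 0 = 1) (q : ℕ) : 0 < θ q := by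
  rcases Nat.eq_zero_or_pos q with rfl | hq
  · rw [hθ0]; exact one_pos
  · exact (hreg.1 q hq).1

lemma le_theta_one (hreg : RegularSeq θ) {q : ℕ} (hq : 1 ≤ q) : θ q ≤ θ 1 := by
  induction q, hq using Nat.le_induction with
  | base => exact le_rfl
  | succ n hn ih => exact (hreg.2.1 n hn).trans ih

lemma div_nonneg (hreg : RegularSeq θ) (hθ0 : θ 0 = 1) (p q : ℕ) : 0 ≤ θ p / θ q :=
  _root_.div_nonneg (hreg.pos hθ0 p).le (hreg.pos hθ0 q).le

end RegularSeq

lemma sum_nrm_restr_le_sum_nrm_single {nrm : C00 → ℝ} (hn : IsNorm nrm) (v : C00) {m : ℕ}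
    {E : Fin m → Finset ℕ} (hE : ∀ i j : Fin m, i < j → FinLt (E i) (E j)) :
    ∑ i, nrm (restr (E i) v) ≤ ∑ j ∈ v.support, nrm (Finsupp.single j (v j)) := by
  classical
  set piece : Fin m → Finset ℕ := fun i => v.support.filter (· ∈ E i)
  have hdisj : ((univ : Finset (Fin m)) : Set (Fin m)).PairwiseDisjoint piece :=
    fun i _ j _ hij => disjoint_filter.2 fun _ _ h => disjoint_left.1 (disjoint_of_finLt hE hij) h
  calc ∑ i, nrm (restr (E i) v)
      ≤ ∑ i, ∑ j ∈ piece i, nrm (Finsupp.single j (v j)) :=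
        sum_le_sum fun i _ => by
          rw [restr, Finsupp.filter_eq_sum]
          exact hn.sum_le _ _
    _ = ∑ j ∈ univ.biUnion piece, nrm (Finsupp.single j (v j)) := (sum_biUnion hdisj).symm
    _ ≤ ∑ j ∈ v.support, nrm (Finsupp.single j (v j)) :=
        sum_le_sum_of_subset_of_nonneg (biUnion_subset.2 fun _ _ => filter_subset _ _)
          fun _ _ _ => hn.nonneg _

namespace MixedTsirelsonNorm

variable {θ : ℕ → ℝ} {nrm : C00 → ℝ}

lemma abs_apply_le (hT : MixedTsirelsonNorm θ nrm) (v : C00) (j : ℕ) : |v j| ≤ nrm v := by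
  have hbdd : BddAbove {r : ℝ | ∃ j : ℕ, r = |v j|} := by
    refine ⟨∑ a ∈ v.support, |v a|, ?_⟩
    rintro _ ⟨i, rfl⟩
    by_cases hi : v i = 0
    · rw [hi, abs_zero]
      exact sum_nonneg fun a _ => abs_nonneg _
    · exact single_le_sum (f := fun a => |v a|) (fun a _ => abs_nonneg _)
        (Finsupp.mem_support_iff.2 hi)
  rw [hT v]
  exact (le_csSup hbdd ⟨j, rfl⟩).trans (le_max_left _ _)

lemma theta_mul_sum_le (hT : MixedTsirelsonNorm θ nrm) (hreg : RegularSeq θ) (hn : IsNorm nrm)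
    {q m : ℕ} (hq : 1 ≤ q) {E : Fin m → Finset ℕ} (hE : AdmissibleSets (SchreierFam q) E)
    (v : C00) : θ q * ∑ i, nrm (restr (E i) v) ≤ nrm v := by
  have hbdd : BddAbove {r : ℝ | ∃ (q m : ℕ) (E : Fin m → Finset ℕ), 1 ≤ q ∧
      AdmissibleSets (SchreierFam q) E ∧ r = θ q * ∑ i, nrm (restr (E i) v)} := by
    refine ⟨∑ j ∈ v.support, nrm (Finsupp.single j (v j)), ?_⟩
    rintro _ ⟨q, m, E, hq, hE, rfl⟩
    exact (mul_le_of_le_one_left (sum_nonneg fun i _ => hn.nonneg _) (hreg.1 q hq).2.le).trans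
      (sum_nrm_restr_le_sum_nrm_single hn v hE.2.1)
  rw [hT v]
  exact (le_csSup hbdd ⟨q, m, E, hq, hE, rfl⟩).trans (le_max_right _ _)

lemma le_of_forall_le (hT : MixedTsirelsonNorm θ nrm) {w : C00} {B : ℝ} (hB : 0 ≤ B)
    (hcoord : ∀ j, |w j| ≤ B)
    (hadm : ∀ (q m : ℕ) (E : Fin m → Finset ℕ), 1 ≤ q → AdmissibleSets (SchreierFam q) E →
      θ q * ∑ i, nrm (restr (E i) w) ≤ B) :
    nrm w ≤ B := by
  rw [hT w]
  refine max_le (Real.sSup_le ?_ hB) (Real.sSup_le ?_ hB)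
  · rintro _ ⟨j, rfl⟩
    exact hcoord j
  · rintro _ ⟨q, m, E, hq, hE, rfl⟩
    exact hadm q m E hq hE

/-- By induction on the size of the support: an admissible family either has a member
containing the whole support of `v`, which only costs the factor `θ_q ≤ θ_1 < 1`, or
splits the support into strictly smaller pieces. -/
lemma restr_le (hT : MixedTsirelsonNorm θ nrm) (hreg : RegularSeq θ) (hn : IsNorm nrm)
    (E : Finset ℕ) (v : C00) : nrm (restr E v) ≤ nrm v := by
  induction hcard : v.support.card using Nat.strong_induction_on generalizing v with
  | _ n ih =>
  set w := restr E v
  have hθ1 := hreg.1 1 le_rfl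
  suffices h : nrm w ≤ max (θ 1 * nrm w) (nrm v) by
    rcases max_cases (θ 1 * nrm w) (nrm v) with ⟨hmax, _⟩ | ⟨hmax, _⟩
    · nlinarith [hn.nonneg w, hn.nonneg v]
    · exact hmax ▸ h
  refine hT.le_of_forall_le (le_max_of_le_right (hn.nonneg v)) (fun j => ?_) ?_
  · refine le_max_of_le_right ?_
    rw [restr_apply]
    split_ifs
    · exact hT.abs_apply_le v j
    · rw [abs_zero]; exact hn.nonneg v
  intro q m G hq hG
  by_cases hcover : ∃ i₀, ∀ j ∈ v.support, j ∈ G i₀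
  · obtain ⟨i₀, hi₀⟩ := hcover
    have hsupp : ∀ j ∈ w.support, j ∈ v.support := fun j hj => (mem_support_restr.1 hj).1
    have hsum : ∑ i, nrm (restr (G i) w) = nrm w := by
      rw [sum_eq_single i₀, restr_eq_self fun j hj => hi₀ j (hsupp j hj)]
      · intro i _ hi
        rw [restr_eq_zero fun j hj hjG =>
          disjoint_left.1 (disjoint_of_finLt hG.2.1 hi) hjG (hi₀ j (hsupp j hj)), hn.map_zero]
      · exact fun h => absurd (mem_univ i₀) h
    rw [hsum]
    exact le_max_of_le_left
      (mul_le_mul_of_nonneg_right (hreg.le_theta_one hq) (hn.nonneg w))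
  · push Not at hcover
    refine le_max_of_le_right ((mul_le_mul_of_nonneg_left (sum_le_sum fun i _ => ?_)
      (hreg.1 q hq).1.le).trans (hT.theta_mul_sum_le hreg hn hq hG v))
    obtain ⟨j, hj, hjG⟩ := hcover i
    rw [show restr (G i) w = restr E (restr (G i) v) from restr_comm _ _ _]
    refine ih _ ?_ _ rfl
    rw [← hcard]
    refine card_lt_card ⟨fun a ha => (mem_support_restr.1 ha).1, fun hsub => hjG ?_⟩
    exact (mem_support_restr.1 (hsub hj)).2

end MixedTsirelsonNorm

lemma AdmissibleIntervals.comp_orderEmbOfFin {S S' : Set (Finset ℕ)} {m : ℕ}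
    {G : Fin m → Finset ℕ} (hG : AdmissibleIntervals S G) (C : Finset (Fin m))
    (hC : C.image (fun l => sInf (G l : Set ℕ)) ∈ S') :
    AdmissibleIntervals S' (G ∘ C.orderEmbOfFin rfl) := by
  refine ⟨fun i => hG.1 _, fun i j h => hG.2.1 _ _ ((C.orderEmbOfFin rfl).strictMono h), ?_⟩
  rwa [← image_orderEmbOfFin_univ C rfl, image_image] at hC

lemma empty_mem_schreierFam : ∀ q : ℕ, ∅ ∈ SchreierFam q
  | 0 => by simp [SchreierFam]
  | _ + 1 => ⟨0, Fin.elim0, fun i => i.elim0, fun i => i.elim0, by simp⟩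

/-- Pad the decomposition `F = F_1 ∪ ⋯ ∪ F_r`, where `r ≤ min F ≤ n`, with empty sets. -/
lemma exists_biUnion_of_mem_schreierFam_succ {q n : ℕ} {F : Finset ℕ}
    (hF : F ∈ SchreierFam (q + 1)) (hn : ∃ a ∈ F, a ≤ n) :
    ∃ Fs : Fin n → Finset ℕ, (∀ s, Fs s ∈ SchreierFam q) ∧
      (∀ s t : Fin n, s < t → FinLt (Fs s) (Fs t)) ∧ F = univ.biUnion Fs := by
  obtain ⟨r, Fs, hFs, hlt, hge, rfl⟩ := hF
  obtain ⟨a, ha, han⟩ := hn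
  obtain ⟨t, -, hat⟩ := mem_biUnion.1 ha
  have hrn : r ≤ n := (hge t a hat).trans han
  refine ⟨fun s => if h : (s : ℕ) < r then Fs ⟨s, h⟩ else ∅, fun s => ?_, fun s t hst => ?_, ?_⟩
  · dsimp only
    split_ifs
    exacts [hFs _, empty_mem_schreierFam q]
  · dsimp only
    by_cases ht : (t : ℕ) < r
    · rw [dif_pos (lt_trans (Fin.lt_def.1 hst) ht), dif_pos ht]
      exact hlt _ _ hst
    · rw [dif_neg ht]
      exact fun _ _ _ h => absurd h (notMem_empty _)
  · ext b
    simp only [mem_biUnion, mem_univ, true_and]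
    constructor
    · rintro ⟨t, hb⟩
      exact ⟨Fin.castLE hrn t, by simpa using hb⟩
    · rintro ⟨s, hb⟩
      split_ifs at hb with h
      · exact ⟨_, hb⟩
      · exact absurd hb (notMem_empty _)

/-- The smallest interval containing `U`. -/
def intervalHull (U : Finset ℕ) : Finset ℕ :=
  (range (U.sup id + 1)).filter fun a => (∃ b ∈ U, b ≤ a) ∧ ∃ c ∈ U, a ≤ c

lemma mem_intervalHull {U : Finset ℕ} {a : ℕ} :
    a ∈ intervalHull U ↔ (∃ b ∈ U, b ≤ a) ∧ ∃ c ∈ U, a ≤ c := by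
  rw [intervalHull, mem_filter, mem_range, and_iff_right_iff_imp]
  rintro ⟨-, c, hc, hac⟩
  exact Nat.lt_succ_of_le (hac.trans (le_sup (f := id) hc))

lemma subset_intervalHull (U : Finset ℕ) : U ⊆ intervalHull U :=
  fun a ha => mem_intervalHull.2 ⟨⟨a, ha, le_rfl⟩, a, ha, le_rfl⟩

lemma isInterval_intervalHull (U : Finset ℕ) : IsInterval (intervalHull U) := by
  intro a ha b hb c hac hcb
  exact mem_intervalHull.2 ⟨(mem_intervalHull.1 ha).1.imp fun _ h => ⟨h.1, h.2.trans hac⟩,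
    (mem_intervalHull.1 hb).2.imp fun _ h => ⟨h.1, hcb.trans h.2⟩⟩

lemma FinLt.intervalHull {U V : Finset ℕ} (h : FinLt U V) :
    FinLt (intervalHull U) (intervalHull V) := by
  intro a ha b hb
  obtain ⟨c, hc, hac⟩ := (mem_intervalHull.1 ha).2
  obtain ⟨d, hd, hdb⟩ := (mem_intervalHull.1 hb).1
  exact (hac.trans_lt (h c hc d hd)).trans_le hdb

section AuxiliaryNorms

variable {θ : ℕ → ℝ} {nrm : C00 → ℝ}

lemma pnorm_le_of_forall_le {p : ℕ} (hp : p ≠ 0) (hθ : 0 < θ p) {v : C00} {β : ℝ} (hβ : 0 ≤ β)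
    (h : ∀ (m : ℕ) (G : Fin m → Finset ℕ), AdmissibleIntervals (SchreierFam p) G →
      θ p * ∑ i, nrm (restr (G i) v) ≤ β) :
    pnorm θ nrm p v ≤ β := by
  rw [pnorm, if_neg hp, ← le_div_iff₀' hθ]
  refine Real.sSup_le ?_ (div_nonneg hβ hθ.le)
  rintro _ ⟨m, G, hG, rfl⟩
  rw [le_div_iff₀' hθ]
  exact h m G hG

lemma pnorm_nonneg (hreg : RegularSeq θ) (hθ0 : θ 0 = 1) (hn : IsNorm nrm) (p : ℕ) (v : C00) :
    0 ≤ pnorm θ nrm p v := by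
  unfold pnorm
  split_ifs
  · exact hn.nonneg v
  · refine mul_nonneg (hreg.pos hθ0 p).le (Real.sSup_nonneg ?_)
    rintro _ ⟨m, G, -, rfl⟩
    exact sum_nonneg fun i _ => hn.nonneg _

lemma pnorm_le_nrm (hT : MixedTsirelsonNorm θ nrm) (hreg : RegularSeq θ) (hθ0 : θ 0 = 1)
    (hn : IsNorm nrm) (p : ℕ) (v : C00) : pnorm θ nrm p v ≤ nrm v := by
  rcases Nat.eq_zero_or_pos p with rfl | hp
  · exact (if_pos rfl).le
  exact pnorm_le_of_forall_le hp.ne' (hreg.pos hθ0 p) (hn.nonneg v) fun m G hG =>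
    hT.theta_mul_sum_le hreg hn hp ⟨fun i => (hG.1 i).1, hG.2⟩ v

/-- For `q = 0` an admissible family has at most one member, and `θ_0 = 1`. -/
lemma theta_mul_sum_le_pnorm (hT : MixedTsirelsonNorm θ nrm) (hreg : RegularSeq θ)
    (hθ0 : θ 0 = 1) (hn : IsNorm nrm) {q m : ℕ} {G : Fin m → Finset ℕ}
    (hG : AdmissibleIntervals (SchreierFam q) G) (v : C00) :
    θ q * ∑ i, nrm (restr (G i) v) ≤ pnorm θ nrm q v := by
  rcases Nat.eq_zero_or_pos q with rfl | hq
  · have hinj := (strictMono_sInf_of_finLt (fun i => (hG.1 i).1) hG.2.1).injective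
    have hm : m ≤ 1 := by
      simpa [SchreierFam, card_image_of_injective _ hinj] using hG.2.2
    rw [hθ0, one_mul, pnorm, if_pos rfl]
    obtain rfl | rfl : m = 0 ∨ m = 1 := by omega
    · simpa using hn.nonneg v
    · simpa using hT.restr_le hreg hn (G 0) v
  · rw [pnorm, if_neg hq.ne']
    refine mul_le_mul_of_nonneg_left (le_csSup ?_ ⟨m, G, hG, rfl⟩) (hreg.pos hθ0 q).le
    refine ⟨∑ j ∈ v.support, nrm (Finsupp.single j (v j)), ?_⟩
    rintro _ ⟨m, G, hG, rfl⟩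
    exact sum_nrm_restr_le_sum_nrm_single hn v hG.2.1

lemma theta_mul_sum_le_pnorm_of_subfamily (hT : MixedTsirelsonNorm θ nrm)
    (hreg : RegularSeq θ) (hθ0 : θ 0 = 1) (hn : IsNorm nrm) {S : Set (Finset ℕ)} {q m : ℕ}
    {G : Fin m → Finset ℕ} (hG : AdmissibleIntervals S G) {C : Finset (Fin m)}
    (hC : C.image (fun l => sInf (G l : Set ℕ)) ∈ SchreierFam q) {v : C00} {H : Finset ℕ}
    (hH : ∀ l ∈ C, ∀ j ∈ v.support, j ∈ G l → j ∈ H) :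
    θ q * ∑ l ∈ C, nrm (restr (G l) v) ≤ pnorm θ nrm q (restr H v) := by
  have hrestr : ∀ l ∈ C, restr (G l) v = restr (G l) (restr H v) := fun l hl => by
    rw [restr_comm]
    refine (restr_eq_self fun j hj => ?_).symm
    obtain ⟨hjv, hjG⟩ := mem_support_restr.1 hj
    exact hH l hl j hjv hjG
  rw [sum_congr rfl fun l hl => congrArg nrm (hrestr l hl), ← map_orderEmbOfFin_univ C rfl,
    sum_map]
  exact theta_mul_sum_le_pnorm hT hreg hθ0 hn (hG.comp_orderEmbOfFin C hC) _

lemma sum_pnorm_le_nNorm (hT : MixedTsirelsonNorm θ nrm) (hreg : RegularSeq θ)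
    (hθ0 : θ 0 = 1) (hn : IsNorm nrm) {n p : ℕ} {E : Fin n → Finset ℕ}
    (hint : ∀ s, IsInterval (E s)) (hlt : ∀ s t : Fin n, s < t → FinLt (E s) (E t))
    (hge : ∀ s, ∀ a ∈ E s, n ≤ a) (v : C00) :
    ∑ s, pnorm θ nrm p (restr (E s) v) ≤ nNorm θ nrm n p v := by
  refine le_csSup ⟨n * nrm v, ?_⟩ ⟨E, hint, hlt, hge, rfl⟩
  rintro _ ⟨E, -, -, -, rfl⟩
  calc ∑ s, pnorm θ nrm p (restr (E s) v) ≤ ∑ _s : Fin n, nrm v :=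
        sum_le_sum fun s _ =>
          (pnorm_le_nrm hT hreg hθ0 hn p _).trans (hT.restr_le hreg hn _ v)
    _ = n * nrm v := by simp

lemma nNorm_nonneg (hreg : RegularSeq θ) (hθ0 : θ 0 = 1) (hn : IsNorm nrm) (n p : ℕ)
    (v : C00) : 0 ≤ nNorm θ nrm n p v := by
  refine Real.sSup_nonneg ?_
  rintro _ ⟨E, -, -, -, rfl⟩
  exact sum_nonneg fun s _ => pnorm_nonneg hreg hθ0 hn p _

end AuxiliaryNorms

lemma sum_pnorm_restr_intervalHull_le_nNorm {θ : ℕ → ℝ} {nrm : C00 → ℝ}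
    (hT : MixedTsirelsonNorm θ nrm) (hreg : RegularSeq θ) (hθ0 : θ 0 = 1) (hn : IsNorm nrm)
    {q n m : ℕ} {G : Fin m → Finset ℕ} (hG : ∀ l l' : Fin m, l < l' → FinLt (G l) (G l'))
    {C : Fin n → Finset (Fin m)} (hC : ∀ s t, s < t → ∀ l ∈ C s, ∀ l' ∈ C t, l < l')
    {v : C00} (hv : ∀ j ∈ v.support, n < j) :
    ∑ s, pnorm θ nrm q (restr (intervalHull ((C s).biUnion G ∩ v.support)) v) ≤
      nNorm θ nrm n q v := by
  refine sum_pnorm_le_nNorm hT hreg hθ0 hn (fun s => isInterval_intervalHull _)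
    (fun s t hst => FinLt.intervalHull fun a ha b hb => ?_) (fun s a ha => ?_) v
  · obtain ⟨l, hl, hal⟩ := mem_biUnion.1 (mem_inter.1 ha).1
    obtain ⟨l', hl', hbl'⟩ := mem_biUnion.1 (mem_inter.1 hb).1
    exact hG l l' (hC s t hst l hl l' hl') a hal b hbl'
  · obtain ⟨b, hb, hba⟩ := (mem_intervalHull.1 ha).1
    exact ((hv b (mem_inter.1 hb).2).trans_le hba).le

/-- If the family starts at or before `n` and `v` lives after `n`, the minima of the family
split into at most `n` successive `S_q`-sets; the interval hulls of the corresponding groups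
of intervals, cut down to the support of `v`, form an admissible family for `‖·‖_{n,q}`. -/
lemma theta_mul_sum_le_nNorm {θ : ℕ → ℝ} {nrm : C00 → ℝ} (hT : MixedTsirelsonNorm θ nrm)
    (hreg : RegularSeq θ) (hθ0 : θ 0 = 1) (hn : IsNorm nrm) {q n m : ℕ}
    {G : Fin m → Finset ℕ} (hG : AdmissibleIntervals (SchreierFam (q + 1)) G)
    (hstart : ∃ l, ∃ b ∈ G l, b ≤ n) {v : C00} (hv : ∀ j ∈ v.support, n < j) :
    θ q * ∑ l, nrm (restr (G l) v) ≤ nNorm θ nrm n q v := by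
  classical
  set μ : Fin m → ℕ := fun l => sInf (G l : Set ℕ)
  have hμ : StrictMono μ := strictMono_sInf_of_finLt (fun l => (hG.1 l).1) hG.2.1
  obtain ⟨Fs, hFs, hFs_lt, hFs_eq⟩ := exists_biUnion_of_mem_schreierFam_succ hG.2.2 <| by
    obtain ⟨l, b, hb, hbn⟩ := hstart
    exact ⟨μ l, mem_image_of_mem _ (mem_univ l), (Nat.sInf_le hb).trans hbn⟩
  set C : Fin n → Finset (Fin m) := fun s => univ.filter fun l => μ l ∈ Fs s
  have hC_image : ∀ s, (C s).image μ = Fs s := by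
    intro s
    ext a
    simp only [C, mem_image, mem_filter, mem_univ, true_and]
    refine ⟨fun ⟨l, hl, hla⟩ => hla ▸ hl, fun ha => ?_⟩
    obtain ⟨l, -, rfl⟩ := mem_image.1 (hFs_eq ▸ mem_biUnion.2 ⟨s, mem_univ s, ha⟩)
    exact ⟨l, ha, rfl⟩
  have hpartition : ∑ l, nrm (restr (G l) v) = ∑ s, ∑ l ∈ C s, nrm (restr (G l) v) := by
    rw [← sum_biUnion (t := C) fun s _ t _ hst => disjoint_filter.2 fun l _ hs ht =>
      disjoint_left.1 (disjoint_of_finLt hFs_lt hst) hs ht]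
    congr 1
    ext l
    have h : μ l ∈ univ.biUnion Fs := hFs_eq ▸ mem_image_of_mem μ (mem_univ l)
    simpa [C] using h
  calc θ q * ∑ l, nrm (restr (G l) v)
      = ∑ s, θ q * ∑ l ∈ C s, nrm (restr (G l) v) := by rw [hpartition, mul_sum]
    _ ≤ ∑ s, pnorm θ nrm q (restr (intervalHull ((C s).biUnion G ∩ v.support)) v) :=
        sum_le_sum fun s _ => theta_mul_sum_le_pnorm_of_subfamily hT hreg hθ0 hn hG
          ((hC_image s).symm ▸ hFs s) fun l hl j hjv hjG =>
            subset_intervalHull _ (mem_inter.2 ⟨mem_biUnion.2 ⟨l, hl, hjG⟩, hjv⟩)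
    _ ≤ nNorm θ nrm n q v :=
        sum_pnorm_restr_intervalHull_le_nNorm hT hreg hθ0 hn hG.2.1
          (fun s t hst l hl l' hl' =>
            hμ.lt_iff_lt.1 (hFs_lt s t hst _ (mem_filter.1 hl).2 _ (mem_filter.1 hl').2)) hv

lemma sum_nrm_restr_sum_le {nrm : C00 → ℝ} (hn : IsNorm nrm) {ι : Type*} (s : Finset ι)
    (v : ι → C00) {m : ℕ} (G : Fin m → Finset ℕ) :
    ∑ l, nrm (restr (G l) (∑ i ∈ s, v i)) ≤ ∑ i ∈ s, ∑ l, nrm (restr (G l) (v i)) := by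
  rw [sum_comm]
  exact sum_le_sum fun l _ => restr_sum (G l) s v ▸ hn.sum_le _ _

lemma sum_nrm_restr_restr_sum_le {nrm : C00 → ℝ} (hn : IsNorm nrm) {m : ℕ}
    (G : Fin m → Finset ℕ) (E : Finset ℕ) (A : Finset ℕ) (x : ℕ → C00)
    [DecidablePred fun i => ∃ l, ∃ b ∈ G l, b ∈ E ∧ x i b ≠ 0] :
    ∑ l, nrm (restr (G l) (restr E (∑ i ∈ A, x i))) ≤
      ∑ i ∈ A.filter (fun i => ∃ l, ∃ b ∈ G l, b ∈ E ∧ x i b ≠ 0),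
        ∑ l, nrm (restr (G l) (restr E (x i))) := by
  rw [restr_sum, sum_filter]
  refine (sum_nrm_restr_sum_le hn A _ G).trans_eq (sum_congr rfl fun i _ => ?_)
  split_ifs with hmeet
  · rfl
  refine sum_eq_zero fun l _ => ?_
  rw [restr_restr, restr_eq_zero, hn.map_zero]
  intro j hj hjGE
  obtain ⟨hjG, hjE⟩ := mem_inter.1 hjGE
  exact hmeet ⟨l, j, hjG, hjE, Finsupp.mem_support_iff.1 hj⟩

lemma sum_card_filter_inside_le_card (x : ℕ → C00) (A : Finset ℕ) {n : ℕ}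
    {E : Fin n → Finset ℕ} (hE : ∀ s t : Fin n, s < t → FinLt (E s) (E t)) :
    ∑ s, (A.filter fun i => minSupp (x i) ∈ E s ∧ maxSupp (x i) ∈ E s).card ≤ A.card := by
  rw [← card_biUnion fun s _ t _ hst => disjoint_filter.2 fun i _ hs ht =>
    disjoint_left.1 (disjoint_of_finLt hE hst) hs.1 ht.1]
  exact card_le_card (biUnion_subset.2 fun _ _ => filter_subset _ _)

lemma bddAbove_setOf_exists_lt (k : ℕ) (P : ℕ → Prop) (f : ℕ → ℝ) :
    BddAbove {r : ℝ | ∃ i < k, P i ∧ r = f i} :=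
  ((Set.finite_lt_nat k).image f |>.subset <| by
    rintro _ ⟨i, hi, -, rfl⟩
    exact ⟨i, hi, rfl⟩).bddAbove

section BlockSequence

variable {k : ℕ} {x : ℕ → C00}

lemma restr_sum_eq_sum_filter {F : Finset ℕ} {s : Finset ℕ}
    [DecidablePred fun i => ranSet (x i) ⊆ F]
    (hF : ∀ i ∈ s, (F : Set ℕ) ∩ ranSet (x i) = ∅ ∨ ranSet (x i) ⊆ F) :
    restr F (∑ i ∈ s, x i) = ∑ i ∈ s.filter (fun i => ranSet (x i) ⊆ F), x i := by
  rw [restr_sum, sum_filter]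
  refine sum_congr rfl fun i hi => ?_
  split_ifs with hsub
  · exact restr_eq_self fun j hj => hsub (mem_ranSet (Finsupp.mem_support_iff.1 hj))
  · refine restr_eq_zero fun j hj hjF => ?_
    have hj' : j ∈ (F : Set ℕ) ∩ ranSet (x i) := ⟨hjF, mem_ranSet (Finsupp.mem_support_iff.1 hj)⟩
    rw [(hF i hi).resolve_right hsub] at hj'
    exact hj'

lemma le_maxSupp_of_le (hne : ∀ i < k, x i ≠ 0)
    (hord : ∀ i j : ℕ, i < j → j < k → FinLt (x i).support (x j).support)
    {i j b : ℕ} (hij : i ≤ j) (hj : j < k) (hb : x i b ≠ 0) : b ≤ maxSupp (x j) := by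
  rcases hij.eq_or_lt with rfl | hij
  · exact le_maxSupp hb
  · exact (hord i j hij hj b (Finsupp.mem_support_iff.2 hb) _
      (Finsupp.mem_support_iff.2 (apply_maxSupp_ne_zero (hne j hj)))).le

lemma card_filter_minSupp_lt_le_one
    (hord : ∀ i j : ℕ, i < j → j < k → FinLt (x i).support (x j).support)
    {E : Finset ℕ} {T : Finset ℕ} (hTk : ∀ i ∈ T, i < k) (hTE : ∀ i ∈ T, ∃ b ∈ E, x i b ≠ 0) :
    (T.filter fun i => ∀ e ∈ E, minSupp (x i) < e).card ≤ 1 :=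
  card_le_one_of_forall_not_lt fun a ha b hb hab => by
    obtain ⟨ha, -⟩ := mem_filter.1 ha
    obtain ⟨hb, hbE⟩ := mem_filter.1 hb
    obtain ⟨d, hdE, hd⟩ := hTE a ha
    obtain ⟨d', -, hd'⟩ := hTE b hb
    have hxb : x b ≠ 0 := fun h => hd' (by simp [h])
    exact (hbE d hdE).not_gt (hord a b hab (hTk b hb) d (Finsupp.mem_support_iff.2 hd) _
      (Finsupp.mem_support_iff.2 (apply_minSupp_ne_zero hxb)))

lemma card_filter_lt_maxSupp_le_one
    (hord : ∀ i j : ℕ, i < j → j < k → FinLt (x i).support (x j).support)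
    {E : Finset ℕ} {T : Finset ℕ} (hTk : ∀ i ∈ T, i < k) (hTE : ∀ i ∈ T, ∃ b ∈ E, x i b ≠ 0) :
    (T.filter fun i => ∀ e ∈ E, e < maxSupp (x i)).card ≤ 1 :=
  card_le_one_of_forall_not_lt fun a ha b hb hab => by
    obtain ⟨ha, haE⟩ := mem_filter.1 ha
    obtain ⟨hb, -⟩ := mem_filter.1 hb
    obtain ⟨d, hdE, hd⟩ := hTE b hb
    obtain ⟨d', -, hd'⟩ := hTE a ha
    have hxa : x a ≠ 0 := fun h => hd' (by simp [h])
    exact (haE d hdE).not_gt (hord a b hab (hTk b hb) _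
      (Finsupp.mem_support_iff.2 (apply_maxSupp_ne_zero hxa)) d (Finsupp.mem_support_iff.2 hd))

/-- The exceptions are the first block of `T` and the at most two blocks sticking out of `E`
on either side. -/
lemma card_filter_not_inside_after_le_three
    (hord : ∀ i j : ℕ, i < j → j < k → FinLt (x i).support (x j).support)
    {E : Finset ℕ} (hE : IsInterval E) {T : Finset ℕ} (hTk : ∀ i ∈ T, i < k)
    (hTE : ∀ i ∈ T, ∃ b ∈ E, x i b ≠ 0) :
    (T.filter fun i => ¬ ((minSupp (x i) ∈ E ∧ maxSupp (x i) ∈ E) ∧ ∃ i' ∈ T, i' < i)).card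
      ≤ 3 := by
  set first := T.filter fun i => ∀ i' ∈ T, i ≤ i'
  set left := T.filter fun i => ∀ e ∈ E, minSupp (x i) < e
  set right := T.filter fun i => ∀ e ∈ E, e < maxSupp (x i)
  have hfirst : first.card ≤ 1 := card_le_one_of_forall_not_lt fun a ha b hb hab =>
    (mem_filter.1 hb).2 a (mem_filter.1 ha).1 |>.not_gt hab
  have hsub : (T.filter fun i => ¬ ((minSupp (x i) ∈ E ∧ maxSupp (x i) ∈ E) ∧
      ∃ i' ∈ T, i' < i)) ⊆ first ∪ left ∪ right := by
    intro i hi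
    obtain ⟨hiT, hbad⟩ := mem_filter.1 hi
    obtain ⟨b, hbE, hb⟩ := hTE i hiT
    simp only [first, left, right, mem_union, mem_filter, hiT, true_and]
    by_cases hmin : minSupp (x i) ∈ E
    · by_cases hmax : maxSupp (x i) ∈ E
      · left; left
        intro i' hi'
        by_contra! h
        exact hbad ⟨⟨hmin, hmax⟩, i', hi', h⟩
      · right
        intro e he
        by_contra! h
        exact hmax (hE b hbE e he _ (le_maxSupp hb) h)
    · left; right
      intro e he
      by_contra! h
      exact hmin (hE e he b hbE _ h (minSupp_le hb))
  have hleft : left.card ≤ 1 := card_filter_minSupp_lt_le_one hord hTk hTE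
  have hright : right.card ≤ 1 := card_filter_lt_maxSupp_le_one hord hTk hTE
  calc _ ≤ (first ∪ left ∪ right).card := card_le_card hsub
    _ ≤ first.card + left.card + right.card :=
        (card_union_le _ _).trans (Nat.add_le_add_right (card_union_le _ _) _)
    _ ≤ 3 := by omega

end BlockSequence

section LongAverage

variable {θ : ℕ → ℝ} {nrm : C00 → ℝ} {k : ℕ} {x : ℕ → C00}

/-- A family that already met an earlier block `x_{i'}` starts before `N_{i-1} = max ran x_{i-1}`,
while `x_i` lives after `N_{i-1}`. -/
lemma theta_mul_sum_restr_le_of_earlier (hT : MixedTsirelsonNorm θ nrm) (hreg : RegularSeq θ)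
    (hθ0 : θ 0 = 1) (hn : IsNorm nrm) (hne : ∀ i < k, x i ≠ 0)
    (hord : ∀ i j : ℕ, i < j → j < k → FinLt (x i).support (x j).support)
    {q m : ℕ} {G : Fin m → Finset ℕ} (hG : AdmissibleIntervals (SchreierFam (q + 1)) G)
    {E : Finset ℕ} (hE : IsInterval E) {i i' b : ℕ} (hi : i < k)
    (hmin : minSupp (x i) ∈ E) (hmax : maxSupp (x i) ∈ E) (hi' : i' < i) {l : Fin m}
    (hb : b ∈ G l) (hbx : x i' b ≠ 0) :
    θ (q + 1) * ∑ l, nrm (restr (G l) (restr E (x i))) ≤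
      θ (q + 1) / θ q * nNorm θ nrm (maxSupp (x (i - 1))) q (x i) := by
  have hθq := hreg.pos hθ0 q
  have hmain := theta_mul_sum_le_nNorm hT hreg hθ0 hn hG
    ⟨l, b, hb, le_maxSupp_of_le hne hord (Nat.le_sub_one_of_lt hi') (by omega) hbx⟩
    fun j hj => hord (i - 1) i (by omega) hi _
      (Finsupp.mem_support_iff.2 (apply_maxSupp_ne_zero (hne (i - 1) (by omega)))) j hj
  rw [restr_eq_self fun j hj =>
    mem_of_minSupp_mem_of_maxSupp_mem hE hmin hmax (Finsupp.mem_support_iff.1 hj)]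
  calc θ (q + 1) * ∑ l, nrm (restr (G l) (x i))
      = θ (q + 1) / θ q * (θ q * ∑ l, nrm (restr (G l) (x i))) := by field_simp
    _ ≤ _ := mul_le_mul_of_nonneg_left hmain (hreg.div_nonneg hθ0 _ _)

lemma theta_mul_sum_restr_sum_le (hT : MixedTsirelsonNorm θ nrm) (hreg : RegularSeq θ)
    (hθ0 : θ 0 = 1) (hn : IsNorm nrm) (hne : ∀ i < k, x i ≠ 0)
    (hord : ∀ i j : ℕ, i < j → j < k → FinLt (x i).support (x j).support)
    (hnorm1 : ∀ i < k, nrm (x i) ≤ 1) {q : ℕ} {A : Finset ℕ} (hA : ∀ i ∈ A, i < k) {M : ℝ}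
    (hM0 : 0 ≤ M) (hM : ∀ i ∈ A, 0 < i → nNorm θ nrm (maxSupp (x (i - 1))) q (x i) ≤ M)
    {E : Finset ℕ} (hE : IsInterval E) {m : ℕ} {G : Fin m → Finset ℕ}
    (hG : AdmissibleIntervals (SchreierFam (q + 1)) G) :
    θ (q + 1) * ∑ l, nrm (restr (G l) (restr E (∑ i ∈ A, x i))) ≤
      3 + (A.filter fun i => minSupp (x i) ∈ E ∧ maxSupp (x i) ∈ E).card *
        (θ (q + 1) / θ q * M) := by
  classical
  have hθ := hreg.pos hθ0 (q + 1)
  set f : ℕ → ℝ := fun i => θ (q + 1) * ∑ l, nrm (restr (G l) (restr E (x i)))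
  set T := A.filter fun i => ∃ l, ∃ b ∈ G l, b ∈ E ∧ x i b ≠ 0
  set good : ℕ → Prop := fun i => (minSupp (x i) ∈ E ∧ maxSupp (x i) ∈ E) ∧ ∃ i' ∈ T, i' < i
  have hf_le_one : ∀ i ∈ A, f i ≤ 1 := fun i hi =>
    (hT.theta_mul_sum_le hreg hn (Nat.le_add_left 1 q) ⟨fun l => (hG.1 l).1, hG.2⟩ _).trans
      ((hT.restr_le hreg hn E (x i)).trans (hnorm1 i (hA i hi)))
  have hf_good : ∀ i ∈ T, good i → f i ≤ θ (q + 1) / θ q * M := by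
    rintro i hiT ⟨⟨hmin, hmax⟩, i', hi'T, hi'i⟩
    obtain ⟨hiA, -⟩ := mem_filter.1 hiT
    obtain ⟨-, l, b, hb, -, hbx⟩ := mem_filter.1 hi'T
    exact (theta_mul_sum_restr_le_of_earlier hT hreg hθ0 hn hne hord hG hE (hA i hiA) hmin hmax
      hi'i hb hbx).trans (mul_le_mul_of_nonneg_left (hM i hiA (by omega)) (hreg.div_nonneg hθ0 _ _))
  have hbad := card_filter_not_inside_after_le_three hord hE (T := T)
    (fun i hi => hA i (mem_filter.1 hi).1)
    fun i hi => by
      obtain ⟨-, l, b, -, hbE, hbx⟩ := mem_filter.1 hi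
      exact ⟨b, hbE, hbx⟩
  have hgood_sub : T.filter good ⊆ A.filter fun i => minSupp (x i) ∈ E ∧ maxSupp (x i) ∈ E :=
    fun i hi => mem_filter.2 ⟨(mem_filter.1 (mem_filter.1 hi).1).1, (mem_filter.1 hi).2.1⟩
  calc θ (q + 1) * ∑ l, nrm (restr (G l) (restr E (∑ i ∈ A, x i)))
      ≤ ∑ i ∈ T, f i :=
        (mul_le_mul_of_nonneg_left (sum_nrm_restr_restr_sum_le hn G E A x) hθ.le).trans_eq
          (mul_sum _ _ _)
    _ = ∑ i ∈ T.filter good, f i + ∑ i ∈ T.filter (¬ good ·), f i :=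
        (sum_filter_add_sum_filter_not _ _ _).symm
    _ ≤ (T.filter good).card * (θ (q + 1) / θ q * M) + (T.filter (¬ good ·)).card * 1 := by
        gcongr <;> rw [← nsmul_eq_mul] <;> refine sum_le_card_nsmul _ _ _ fun i hi => ?_
        · exact hf_good i (mem_filter.1 hi).1 (mem_filter.1 hi).2
        · exact hf_le_one i (mem_filter.1 (mem_filter.1 hi).1).1
    _ ≤ _ := by
        have hcM : 0 ≤ θ (q + 1) / θ q * M := mul_nonneg (hreg.div_nonneg hθ0 _ _) hM0
        rw [mul_one, add_comm]
        gcongr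
        exact_mod_cast hbad

lemma nNorm_smul_sum_le (hT : MixedTsirelsonNorm θ nrm) (hreg : RegularSeq θ)
    (hθ0 : θ 0 = 1) (hn : IsNorm nrm) (hne : ∀ i < k, x i ≠ 0)
    (hord : ∀ i j : ℕ, i < j → j < k → FinLt (x i).support (x j).support)
    (hnorm1 : ∀ i < k, nrm (x i) ≤ 1) {q : ℕ} {A : Finset ℕ} (hA : ∀ i ∈ A, i < k) {M : ℝ}
    (hM0 : 0 ≤ M) (hM : ∀ i ∈ A, 0 < i → nNorm θ nrm (maxSupp (x (i - 1))) q (x i) ≤ M)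
    (N : ℕ) {t : ℝ} (ht : 0 ≤ t) :
    nNorm θ nrm N (q + 1) (t • ∑ i ∈ A, x i) ≤
      t * (3 * N + A.card * (θ (q + 1) / θ q * M)) := by
  have hcM : 0 ≤ θ (q + 1) / θ q * M := mul_nonneg (hreg.div_nonneg hθ0 _ _) hM0
  refine Real.sSup_le ?_ (by positivity)
  rintro _ ⟨E, hE, hElt, -, rfl⟩
  have hwindow : ∀ s, pnorm θ nrm (q + 1) (restr (E s) (t • ∑ i ∈ A, x i)) ≤
      t * (3 + (A.filter fun i => minSupp (x i) ∈ E s ∧ maxSupp (x i) ∈ E s).card *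
        (θ (q + 1) / θ q * M)) :=
    fun s => pnorm_le_of_forall_le q.succ_ne_zero (hreg.pos hθ0 _) (by positivity)
      fun m G hG => by
        simp_rw [restr_smul, hn.2.1, abs_of_nonneg ht, ← mul_sum, mul_left_comm _ t]
        exact mul_le_mul_of_nonneg_left
          (theta_mul_sum_restr_sum_le hT hreg hθ0 hn hne hord hnorm1 hA hM0 hM (hE s) hG) ht
  have hcard : ∑ s, ((A.filter fun i => minSupp (x i) ∈ E s ∧ maxSupp (x i) ∈ E s).card : ℝ)
      ≤ A.card := by
    exact_mod_cast sum_card_filter_inside_le_card x A hElt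
  refine (sum_le_sum fun s _ => hwindow s).trans ?_
  rw [← mul_sum, sum_add_distrib, ← sum_mul, sum_const, card_univ, Fintype.card_fin,
    nsmul_eq_mul, mul_comm (N : ℝ)]
  gcongr

end LongAverage

theorem long_average_nNorm_estimate_general
    (θ : ℕ → ℝ) (hreg : RegularSeq θ) (hθ0 : θ 0 = 1)
    (nrm : C00 → ℝ) (hn : IsNorm nrm) (hT : MixedTsirelsonNorm θ nrm)
    (k : ℕ) (x : ℕ → C00)
    (hne : ∀ i < k, x i ≠ 0)
    (hord : ∀ i j : ℕ, i < j → j < k → FinLt (x i).support (x j).support)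
    (hnorm1 : ∀ i < k, nrm (x i) ≤ 1)
    (ε : ℝ) (hε0 : 0 < ε) (N : ℕ)
    (F : Finset ℕ)
    (hFns : ∀ i < k, ((F : Set ℕ) ∩ ranSet (x i) = (∅ : Set ℕ)) ∨ ranSet (x i) ⊆ (F : Set ℕ))
    (hbig : 6 * (N : ℝ) / (θ 1 * ε) < (k : ℝ))
    (p : ℕ) (hp : 1 ≤ p) :
    nNorm θ nrm N p (restr F ((k : ℝ)⁻¹ • ∑ i ∈ Finset.range k, x i)) ≤
      (θ p / θ (p - 1)) *
        sSup {r : ℝ | ∃ i < k, ranSet (x i) ⊆ (F : Set ℕ) ∧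
          r = nNorm θ nrm (if i = 0 then 1 else maxSupp (x (i - 1))) (p - 1) (x i)} +
      ε := by
  classical
  obtain ⟨q, rfl⟩ : ∃ q, p = q + 1 := ⟨p - 1, by omega⟩
  rw [Nat.add_sub_cancel]
  set ν : ℕ → ℝ := fun i => nNorm θ nrm (if i = 0 then 1 else maxSupp (x (i - 1))) q (x i)
  set S := {r : ℝ | ∃ i < k, ranSet (x i) ⊆ (F : Set ℕ) ∧ r = ν i}
  set A := (range k).filter fun i => ranSet (x i) ⊆ F
  have hA : ∀ i ∈ A, i < k := fun i hi => mem_range.1 (mem_filter.1 hi).1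
  have hM0 : 0 ≤ sSup S := Real.sSup_nonneg <| by
    rintro _ ⟨i, -, -, rfl⟩
    exact nNorm_nonneg hreg hθ0 hn _ _ _
  have hθ1ε : 0 < θ 1 * ε := mul_pos (hreg.1 1 le_rfl).1 hε0
  have hk : (0 : ℝ) < k := (div_nonneg (by positivity) hθ1ε.le).trans_lt hbig
  have h3N : 3 * (N : ℝ) ≤ k * ε := by
    rw [div_lt_iff₀ hθ1ε] at hbig
    nlinarith [mul_le_mul_of_nonneg_right (hreg.1 1 le_rfl).2.le (mul_nonneg hk.le hε0.le)]
  have hAk : (A.card : ℝ) ≤ k := by exact_mod_cast (card_filter_le _ _).trans (card_range k).le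
  have hM : ∀ i ∈ A, 0 < i → nNorm θ nrm (maxSupp (x (i - 1))) q (x i) ≤ sSup S :=
    fun i hi hi0 => le_csSup (bddAbove_setOf_exists_lt k _ ν)
      ⟨i, hA i hi, (mem_filter.1 hi).2, by simp [ν, hi0.ne']⟩
  rw [restr_smul, restr_sum_eq_sum_filter fun i hi => hFns i (mem_range.1 hi)]
  refine (nNorm_smul_sum_le hT hreg hθ0 hn hne hord hnorm1 hA hM0 hM N
    (inv_nonneg.2 hk.le)).trans ?_
  rw [inv_mul_le_iff₀ hk]
  have hcM : 0 ≤ θ (q + 1) / θ q * sSup S := mul_nonneg (hreg.div_nonneg hθ0 _ _) hM0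
  nlinarith [mul_le_mul_of_nonneg_right hAk hcM]

/-- Lemma 4.10 (1): estimate for `‖Fx‖_{N,p}` for a long average
`x = (1/k)(x_1 + ⋯ + x_k)` and an interval `F ⊆ ran(x)` not splitting the `x_i`'s. -/
theorem long_average_nNorm_estimate
    (θ : ℕ → ℝ) (hreg : RegularSeq θ) (hθ0 : θ 0 = 1)
    (nrm : C00 → ℝ) (hn : IsNorm nrm) (hT : MixedTsirelsonNorm θ nrm)
    (k : ℕ) (x : ℕ → C00)
    (hne : ∀ i < k, x i ≠ 0)
    (hord : ∀ i j : ℕ, i < j → j < k → FinLt (x i).support (x j).support)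
    (hk0 : 0 < k) (hfirst : k ≤ minSupp (x 0))
    (hnorm1 : ∀ i < k, nrm (x i) ≤ 1)
    (ε : ℝ) (hε0 : 0 < ε) (hε1 : ε < 1) (N : ℕ)
    (F : Finset ℕ) (hFI : IsInterval F)
    (hFsub : (F : Set ℕ) ⊆ ranSet ((k : ℝ)⁻¹ • ∑ i ∈ Finset.range k, x i))
    (hFns : ∀ i < k, ((F : Set ℕ) ∩ ranSet (x i) = (∅ : Set ℕ)) ∨ ranSet (x i) ⊆ (F : Set ℕ))
    (hbig : 6 * (N : ℝ) / (θ 1 * ε) < (k : ℝ))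
    (p : ℕ) (hp : 1 ≤ p) :
    nNorm θ nrm N p (restr F ((k : ℝ)⁻¹ • ∑ i ∈ Finset.range k, x i)) ≤
      (θ p / θ (p - 1)) *
        sSup {r : ℝ | ∃ i < k, ranSet (x i) ⊆ (F : Set ℕ) ∧
          r = nNorm θ nrm (if i = 0 then 1 else maxSupp (x (i - 1))) (p - 1) (x i)} +
      ε :=
  long_average_nNorm_estimate_general θ hreg hθ0 nrm hn hT k x hne hord hnorm1 ε hε0 N F hFns hbig p
    hp

end
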